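/- arXiv:1502.04683 — 5 statements merged into one kernel-verified Lean document; each statement's English description precedes it below -/
import Mathlib

section
/- Let λ₁, λ₂ > 0, m ∈ ℂ, θ ∈ ℝ with sin(2θ) ≠ 0, and let A be the 4×4 matrix from the two-dimensional causality proof: diag entries (1/2)√(λ₂/λ₁)|m|csc²θ, (1/2)√(λ₁/λ₂)|m|csc²θ, (1/2)√(λ₂/λ₁)|m|sec²θ, (1/2)√(λ₁/λ₂)|m|sec²θ, with A₁₄ = m·csc(2θ), A₂₃ = -m·csc(2θ), A₃₂ = conj(A₂₃), A₄₁ = conj(A₁₄), all other entries zero. Then det A = 0 and the sum of the 3×3 principal minors of A equals 0. -/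
/-! The matrix is a direct sum of the two 2×2 blocks on the coordinates {1,4} and {2,3}, so
`det A` and the sum of the principal 3×3 minors are `det B₁ det B₂` and
`tr B₁ det B₂ + tr B₂ det B₁`. Each block is singular: the product of its diagonal entries is
`|m|² / (4 sin²θ cos²θ) = |m|² / sin²(2θ)`, which is the product of its off-diagonal entries. -/

open Matrix Real

noncomputable def appendixAMatrix (lam1 lam2 : ℝ) (m : ℂ) (θ : ℝ) : Matrix (Fin 4) (Fin 4) ℂ :=
  !![(((1/2) * Real.sqrt (lam2/lam1) * ‖m‖ / (Real.sin θ)^2 : ℝ) : ℂ), 0, 0,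
        m / (Real.sin (2*θ));
     0, (((1/2) * Real.sqrt (lam1/lam2) * ‖m‖ / (Real.sin θ)^2 : ℝ) : ℂ),
        -(m / (Real.sin (2*θ))), 0;
     0, -((starRingEnd ℂ) m / (Real.sin (2*θ))),
        (((1/2) * Real.sqrt (lam2/lam1) * ‖m‖ / (Real.cos θ)^2 : ℝ) : ℂ), 0;
     (starRingEnd ℂ) m / (Real.sin (2*θ)), 0, 0,
        (((1/2) * Real.sqrt (lam1/lam2) * ‖m‖ / (Real.cos θ)^2 : ℝ) : ℂ)]

section TwoBlockMatrix

variable {R : Type*} [CommRing R] (a b c d x y : R)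

def twoBlockMatrix : Matrix (Fin 4) (Fin 4) R :=
  !![a, 0, 0, x; 0, b, -x, 0; 0, -y, c, 0; y, 0, 0, d]

theorem det_twoBlockMatrix :
    (twoBlockMatrix a b c d x y).det = (a * d - x * y) * (b * c - x * y) := by
  simp [twoBlockMatrix, det_succ_row_zero, Fin.sum_univ_succ, Fin.succAbove]
  ring

theorem sum_principalMinors_twoBlockMatrix :
    ∑ i : Fin 4, ((twoBlockMatrix a b c d x y).submatrix i.succAbove i.succAbove).det
      = (a + d) * (b * c - x * y) + (b + c) * (a * d - x * y) := by
  simp [twoBlockMatrix, Fin.sum_univ_four, det_fin_three, Fin.succAbove]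
  ring

end TwoBlockMatrix

theorem sqrt_div_mul_sqrt_div {p q : ℝ} (hp : 0 < p) (hq : 0 < q) :
    √(p / q) * √(q / p) = 1 := by
  rw [← Real.sqrt_mul (by positivity), div_mul_div_comm, mul_comm p q, div_self (by positivity),
    Real.sqrt_one]

theorem half_sqrt_div_mul_half_sqrt_div {p q : ℝ} (hp : 0 < p) (hq : 0 < q) (r s t : ℝ) :
    (1 / 2 * √(p / q) * r / s ^ 2) * (1 / 2 * √(q / p) * r / t ^ 2) = r ^ 2 / (2 * s * t) ^ 2 := by
  calc _ = (√(p / q) * √(q / p)) * r ^ 2 / (2 * s * t) ^ 2 := by ring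
    _ = _ := by rw [sqrt_div_mul_sqrt_div hp hq, one_mul]

theorem div_mul_conj_div (m : ℂ) (u : ℝ) :
    m / u * (starRingEnd ℂ m / u) = ((‖m‖ ^ 2 / u ^ 2 : ℝ) : ℂ) := by
  rw [div_mul_div_comm, Complex.mul_conj, Complex.normSq_eq_norm_sq]
  push_cast
  ring

theorem appendixAMatrix_eq_twoBlockMatrix (lam1 lam2 : ℝ) (m : ℂ) (θ : ℝ) :
    appendixAMatrix lam1 lam2 m θ = twoBlockMatrix
      (((1/2) * √(lam2/lam1) * ‖m‖ / (sin θ)^2 : ℝ) : ℂ)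
      (((1/2) * √(lam1/lam2) * ‖m‖ / (sin θ)^2 : ℝ) : ℂ)
      (((1/2) * √(lam2/lam1) * ‖m‖ / (cos θ)^2 : ℝ) : ℂ)
      (((1/2) * √(lam1/lam2) * ‖m‖ / (cos θ)^2 : ℝ) : ℂ)
      (m / (sin (2*θ))) (starRingEnd ℂ m / (sin (2*θ))) :=
  rfl

theorem stmt_1_general (lam1 lam2 : ℝ) (hlam1 : 0 < lam1) (hlam2 : 0 < lam2)
    (m : ℂ) (θ : ℝ) :
    (appendixAMatrix lam1 lam2 m θ).det = 0 ∧
    (∑ i : Fin 4,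
      ((appendixAMatrix lam1 lam2 m θ).submatrix i.succAbove i.succAbove).det) = 0 := by
  have hxy := div_mul_conj_div m (sin (2 * θ))
  have had := half_sqrt_div_mul_half_sqrt_div hlam2 hlam1 ‖m‖ (sin θ) (cos θ)
  have hbc := half_sqrt_div_mul_half_sqrt_div hlam1 hlam2 ‖m‖ (sin θ) (cos θ)
  rw [← sin_two_mul] at had hbc
  rw [appendixAMatrix_eq_twoBlockMatrix, det_twoBlockMatrix, sum_principalMinors_twoBlockMatrix,
    ← Complex.ofReal_mul, ← Complex.ofReal_mul, had, hbc, hxy]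
  simp

theorem stmt_1 (lam1 lam2 : ℝ) (hlam1 : 0 < lam1) (hlam2 : 0 < lam2)
    (m : ℂ) (θ : ℝ) (hθ : Real.sin (2*θ) ≠ 0) :
    (appendixAMatrix lam1 lam2 m θ).det = 0 ∧
    (∑ i : Fin 4,
      ((appendixAMatrix lam1 lam2 m θ).submatrix i.succAbove i.succAbove).det) = 0 :=
  stmt_1_general lam1 lam2 hlam1 hlam2 m θ
end

section
/- Let w⁰, w¹, w², w³ ∈ ℝ with w⁰ > 0 and (w⁰)² - (w¹)² - (w²)² - (w³)² > 0 (timelike future-directed). Then there exists ψ ∈ ℂ⁴ such that ψ*V⁰ψ = w⁰, ψ*V¹ψ = w¹, ψ*V²ψ = w², ψ*V³ψ = w³, where V⁰ = I₄, V¹ has entries V¹₁₂ = V¹₂₁ = -1, V¹₃₄ = V¹₄₃ = 1 (else 0), V² has V²₁₂ = i, V²₂₁ = -i, V²₃₄ = -i, V²₄₃ = i (else 0), and V³ = diag(-1, 1, 1, -1). -/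
open Matrix Complex

noncomputable def V0 : Matrix (Fin 4) (Fin 4) ℂ := 1

noncomputable def V1 : Matrix (Fin 4) (Fin 4) ℂ :=
  !![0,-1,0,0; -1,0,0,0; 0,0,0,1; 0,0,1,0]

noncomputable def V2 : Matrix (Fin 4) (Fin 4) ℂ :=
  !![0,Complex.I,0,0; -Complex.I,0,0,0; 0,0,0,-Complex.I; 0,0,Complex.I,0]

noncomputable def V3 : Matrix (Fin 4) (Fin 4) ℂ :=
  !![-1,0,0,0; 0,1,0,0; 0,0,1,0; 0,0,0,-1]

theorem stmt_7 (w0 w1 w2 w3 : ℝ) (hw0 : 0 < w0)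
    (htimelike : 0 < w0^2 - w1^2 - w2^2 - w3^2) :
    ∃ ψ : Fin 4 → ℂ,
      star ψ ⬝ᵥ V0.mulVec ψ = (w0 : ℂ) ∧
      star ψ ⬝ᵥ V1.mulVec ψ = (w1 : ℂ) ∧
      star ψ ⬝ᵥ V2.mulVec ψ = (w2 : ℂ) ∧
      star ψ ⬝ᵥ V3.mulVec ψ = (w3 : ℂ) := by
  have hA : 0 < w0 - w3 := by nlinarith [sq_nonneg w1, sq_nonneg w2, sq_nonneg (w0 + w3)]
  obtain ⟨r, hrdef⟩ : ∃ r : ℝ, r = Real.sqrt (2 * (w0 - w3)) := ⟨_, rfl⟩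
  have hr2 : r ^ 2 = 2 * (w0 - w3) := by rw [hrdef]; exact Real.sq_sqrt (by linarith)
  have hrpos : 0 < r := by rw [hrdef]; exact Real.sqrt_pos.2 (by linarith)
  have hrne : r ≠ 0 := ne_of_gt hrpos
  obtain ⟨p, hpdef⟩ : ∃ p : ℝ, p = r / 2 := ⟨_, rfl⟩
  obtain ⟨b1, hb1def⟩ : ∃ b1 : ℝ, b1 = -w1 / r := ⟨_, rfl⟩
  obtain ⟨b2, hb2def⟩ : ∃ b2 : ℝ, b2 = -w2 / r := ⟨_, rfl⟩
  obtain ⟨q, hqdef⟩ : ∃ q : ℝ,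
      q = Real.sqrt ((w0^2 - w1^2 - w2^2 - w3^2) / (2 * (w0 - w3))) := ⟨_, rfl⟩
  have hq2 : q ^ 2 = (w0^2 - w1^2 - w2^2 - w3^2) / (2 * (w0 - w3)) := by
    rw [hqdef]; exact Real.sq_sqrt (by positivity)
  have hp2 : p ^ 2 = (w0 - w3) / 2 := by
    have : p ^ 2 = r ^ 2 / 4 := by rw [hpdef]; ring
    rw [this, hr2]; ring
  have hb1sq : b1 ^ 2 = w1 ^ 2 / (2 * (w0 - w3)) := by
    have : b1 ^ 2 = w1 ^ 2 / r ^ 2 := by rw [hb1def]; field_simp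
    rw [this, hr2]
  have hb2sq : b2 ^ 2 = w2 ^ 2 / (2 * (w0 - w3)) := by
    have : b2 ^ 2 = w2 ^ 2 / r ^ 2 := by rw [hb2def]; field_simp
    rw [this, hr2]
  have hpb1 : p * b1 = -w1 / 2 := by rw [hpdef, hb1def]; field_simp
  have hpb2 : p * b2 = -w2 / 2 := by rw [hpdef, hb2def]; field_simp
  refine ⟨![((p:ℝ):ℂ), (↑b1 + ↑b2 * Complex.I), ((q:ℝ):ℂ), 0], ?_, ?_, ?_, ?_⟩ <;>
    simp [V0, V1, V2, V3, Matrix.one_apply, mulVec, dotProduct, Fin.sum_univ_four,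
      Matrix.vecHead, Matrix.vecTail, Complex.ext_iff] <;> ring_nf <;>
    refine ⟨?_, trivial⟩
  · rw [hp2, hb1sq, hb2sq, hq2]; field_simp; ring
  · rw [show -(p * b1 * 2) = -(p * b1) * 2 by ring, hpb1]; ring
  · rw [show -(p * b2 * 2) = -(p * b2) * 2 by ring, hpb2]; ring
  · rw [show -p^2 + b1^2 + b2^2 + q^2
        = -(p^2) + b1^2 + b2^2 + q^2 by ring, hp2, hb1sq, hb2sq, hq2]
    field_simp; ring
end

section
/- With the matrices V⁰,V¹,V²,V³ and W = -γ¹γ²γ³ (having W₁₃ = W₂₄ = 1, W₃₁ = W₄₂ = -1, else 0) in the Weyl representation, for every future-directed timelike vector (w⁰,w¹,w²,w³) (i.e. w⁰ > 0, (w⁰)² > (w¹)²+(w²)²+(w³)²) there exist ψ₁, ψ₂ ∈ ℂ⁴ with ψₖ*Vᵃψₖ = wᵃ for a = 0,1,2,3 and k = 1,2, and |ψ₁* W ψ₂| = √((w⁰)² - (w¹)² - (w²)² - (w³)²). -/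
/-!
Take `ψ₁ = ψ₂ = (a u, i b u)` for a unit two-spinor `u = (c, z)` and reals `a, b ≥ 0`. Each `Vᵏ`
acts as `∓σₖ` on the two halves of `ψ`, so `ψ*V⁰ψ = a² + b²`, `ψ*Wψ = 2iab`, and `(ψ*Vᵏψ)ₖ` is
`b² - a²` times the Hopf image `h(u)`, a unit vector. As the Hopf map `S³ → S²` is onto, `u` can
be chosen with `(b² - a²) h(u) = w⃗` as soon as `b² - a² = |w⃗|`; together with `a² + b² = w⁰`
this forces `2ab = √((w⁰)² - |w⃗|²)`.
-/

open Matrix Complex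

/-- `W = -γ¹γ²γ³` in the Weyl representation. -/
noncomputable def Wmat : Matrix (Fin 4) (Fin 4) ℂ :=
  !![0,0,1,0; 0,0,0,1; -1,0,0,0; 0,-1,0,0]

theorem exists_hopf_preimage (n₁ n₂ n₃ ρ : ℝ) (hρ : 0 ≤ ρ)
    (hn : n₁ ^ 2 + n₂ ^ 2 + n₃ ^ 2 = ρ ^ 2) :
    ∃ (c : ℝ) (z : ℂ), c ^ 2 + normSq z = ρ ∧ 2 * c * z.re = n₁ ∧ 2 * c * z.im = n₂ ∧
      c ^ 2 - normSq z = n₃ := by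
  obtain ⟨hlo, hhi⟩ := abs_le_of_sq_le_sq' (by nlinarith : n₃ ^ 2 ≤ ρ ^ 2) hρ
  set c := √((ρ + n₃) / 2)
  set s := √((ρ - n₃) / 2)
  have hc : c ^ 2 = (ρ + n₃) / 2 := Real.sq_sqrt (by linarith)
  have hs : s ^ 2 = (ρ - n₃) / 2 := Real.sq_sqrt (by linarith)
  set ζ : ℂ := ⟨n₁, n₂⟩
  have hζ : ‖ζ‖ = 2 * c * s := by
    rw [norm_def, normSq_mk, ← Real.sqrt_sq (by positivity : 0 ≤ 2 * c * s)]
    congr 1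
    linear_combination hn - 4 * s ^ 2 * hc - 2 * (ρ + n₃) * hs
  have hz : normSq (s * exp (arg ζ * I)) = s ^ 2 := by
    rw [normSq_mul, normSq_ofReal, normSq_eq_norm_sq, norm_exp_ofReal_mul_I]; ring
  have hcz : (2 * c : ℂ) * (s * exp (arg ζ * I)) = ζ := by
    conv_rhs => rw [← norm_mul_exp_arg_mul_I ζ, hζ]
    push_cast; ring
  refine ⟨c, s * exp (arg ζ * I), by linarith, ?_, ?_, by linarith⟩
  · simpa [ζ] using congrArg re hcz
  · simpa [ζ] using congrArg im hcz

/- The spinor `(a u, i b u)` with `u = (c, z)`. -/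
noncomputable def weylSpinor (a b c : ℝ) (z : ℂ) : Fin 4 → ℂ :=
  ![a * c, a * z, I * (b * c), I * (b * z)]

section weylSpinor

variable (a b c : ℝ) (z : ℂ)

theorem star_dotProduct_V0_mulVec_weylSpinor :
    star (weylSpinor a b c z) ⬝ᵥ V0 *ᵥ weylSpinor a b c z =
      ((a ^ 2 + b ^ 2) * (c ^ 2 + normSq z) : ℝ) := by
  simp [weylSpinor, V0, dotProduct, Fin.sum_univ_four, Complex.ext_iff, -ofReal_pow,
    normSq_apply]
  constructor <;> ring

theorem star_dotProduct_V1_mulVec_weylSpinor :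
    star (weylSpinor a b c z) ⬝ᵥ V1 *ᵥ weylSpinor a b c z =
      ((b ^ 2 - a ^ 2) * (2 * c * z.re) : ℝ) := by
  simp [weylSpinor, V1, dotProduct, mulVec, Fin.sum_univ_four, Complex.ext_iff, -ofReal_pow]
  constructor <;> ring

theorem star_dotProduct_V2_mulVec_weylSpinor :
    star (weylSpinor a b c z) ⬝ᵥ V2 *ᵥ weylSpinor a b c z =
      ((b ^ 2 - a ^ 2) * (2 * c * z.im) : ℝ) := by
  simp [weylSpinor, V2, dotProduct, mulVec, Fin.sum_univ_four, Complex.ext_iff, -ofReal_pow]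
  constructor <;> ring

theorem star_dotProduct_V3_mulVec_weylSpinor :
    star (weylSpinor a b c z) ⬝ᵥ V3 *ᵥ weylSpinor a b c z =
      ((b ^ 2 - a ^ 2) * (c ^ 2 - normSq z) : ℝ) := by
  simp [weylSpinor, V3, dotProduct, mulVec, Fin.sum_univ_four, Complex.ext_iff, -ofReal_pow,
    normSq_apply]
  constructor <;> ring

theorem star_dotProduct_Wmat_mulVec_weylSpinor :
    star (weylSpinor a b c z) ⬝ᵥ Wmat *ᵥ weylSpinor a b c z =
      (2 * a * b * (c ^ 2 + normSq z) : ℝ) * I := by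
  simp [weylSpinor, Wmat, dotProduct, mulVec, Fin.sum_univ_four, Complex.ext_iff, -ofReal_pow,
    normSq_apply]
  constructor <;> ring

end weylSpinor

theorem exists_unit_hopf_preimage_smul (w₁ w₂ w₃ : ℝ) :
    ∃ (c : ℝ) (z : ℂ), c ^ 2 + normSq z = 1 ∧
      √(w₁ ^ 2 + w₂ ^ 2 + w₃ ^ 2) * (2 * c * z.re) = w₁ ∧
      √(w₁ ^ 2 + w₂ ^ 2 + w₃ ^ 2) * (2 * c * z.im) = w₂ ∧
      √(w₁ ^ 2 + w₂ ^ 2 + w₃ ^ 2) * (c ^ 2 - normSq z) = w₃ := by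
  set r := √(w₁ ^ 2 + w₂ ^ 2 + w₃ ^ 2)
  have hr : r ^ 2 = w₁ ^ 2 + w₂ ^ 2 + w₃ ^ 2 := Real.sq_sqrt (by positivity)
  by_cases hr₀ : r = 0
  · have hw : w₁ = 0 ∧ w₂ = 0 ∧ w₃ = 0 := by
      rw [hr₀] at hr
      refine ⟨?_, ?_, ?_⟩ <;> nlinarith [sq_nonneg w₁, sq_nonneg w₂, sq_nonneg w₃]
    exact ⟨1, 0, by simp, by simp [hr₀, hw]⟩
  · obtain ⟨c, z, hunit, h₁, h₂, h₃⟩ :=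
      exists_hopf_preimage (w₁ / r) (w₂ / r) (w₃ / r) 1 zero_le_one (by field_simp; linarith)
    refine ⟨c, z, hunit, ?_, ?_, ?_⟩
    · rw [h₁, mul_div_cancel₀ _ hr₀]
    · rw [h₂, mul_div_cancel₀ _ hr₀]
    · rw [h₃, mul_div_cancel₀ _ hr₀]

theorem stmt_8 (w0 w1 w2 w3 : ℝ) (hw0 : 0 < w0)
    (htimelike : w1^2 + w2^2 + w3^2 < w0^2) :
    ∃ ψ₁ ψ₂ : Fin 4 → ℂ,
      (star ψ₁ ⬝ᵥ V0.mulVec ψ₁ = (w0 : ℂ) ∧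
       star ψ₁ ⬝ᵥ V1.mulVec ψ₁ = (w1 : ℂ) ∧
       star ψ₁ ⬝ᵥ V2.mulVec ψ₁ = (w2 : ℂ) ∧
       star ψ₁ ⬝ᵥ V3.mulVec ψ₁ = (w3 : ℂ)) ∧
      (star ψ₂ ⬝ᵥ V0.mulVec ψ₂ = (w0 : ℂ) ∧
       star ψ₂ ⬝ᵥ V1.mulVec ψ₂ = (w1 : ℂ) ∧
       star ψ₂ ⬝ᵥ V2.mulVec ψ₂ = (w2 : ℂ) ∧
       star ψ₂ ⬝ᵥ V3.mulVec ψ₂ = (w3 : ℂ)) ∧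
      ‖star ψ₁ ⬝ᵥ Wmat.mulVec ψ₂‖ =
        Real.sqrt (w0^2 - w1^2 - w2^2 - w3^2) := by
  obtain ⟨c, z, hunit, h₁, h₂, h₃⟩ := exists_unit_hopf_preimage_smul w1 w2 w3
  set r := √(w1 ^ 2 + w2 ^ 2 + w3 ^ 2)
  have hr : r ^ 2 = w1 ^ 2 + w2 ^ 2 + w3 ^ 2 := Real.sq_sqrt (by positivity)
  have hr₀ : 0 ≤ r := Real.sqrt_nonneg _
  have hrw : r < w0 := (Real.sqrt_lt' hw0).mpr htimelike
  set a := √((w0 - r) / 2)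
  set b := √((w0 + r) / 2)
  have ha : a ^ 2 = (w0 - r) / 2 := Real.sq_sqrt (by linarith)
  have hb : b ^ 2 = (w0 + r) / 2 := Real.sq_sqrt (by linarith)
  have hab : 2 * a * b = √(w0 ^ 2 - w1 ^ 2 - w2 ^ 2 - w3 ^ 2) := by
    rw [← Real.sqrt_sq (by positivity : 0 ≤ 2 * a * b)]
    congr 1
    linear_combination 4 * b ^ 2 * ha + 2 * (w0 - r) * hb - hr
  have hψ : star (weylSpinor a b c z) ⬝ᵥ V0 *ᵥ weylSpinor a b c z = (w0 : ℂ) ∧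
      star (weylSpinor a b c z) ⬝ᵥ V1 *ᵥ weylSpinor a b c z = (w1 : ℂ) ∧
      star (weylSpinor a b c z) ⬝ᵥ V2 *ᵥ weylSpinor a b c z = (w2 : ℂ) ∧
      star (weylSpinor a b c z) ⬝ᵥ V3 *ᵥ weylSpinor a b c z = (w3 : ℂ) := by
    have hsum : a ^ 2 + b ^ 2 = w0 := by rw [ha, hb]; ring
    have hdiff : b ^ 2 - a ^ 2 = r := by rw [ha, hb]; ring
    simp only [star_dotProduct_V0_mulVec_weylSpinor, star_dotProduct_V1_mulVec_weylSpinor,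
      star_dotProduct_V2_mulVec_weylSpinor, star_dotProduct_V3_mulVec_weylSpinor, hunit, hsum,
      hdiff, h₁, h₂, h₃, mul_one, and_self]
  refine ⟨weylSpinor a b c z, weylSpinor a b c z, hψ, hψ, ?_⟩
  rw [star_dotProduct_Wmat_mulVec_weylSpinor, hunit, mul_one, norm_mul, norm_I, mul_one,
    norm_real, Real.norm_eq_abs, hab, abs_of_nonneg (Real.sqrt_nonneg _)]
end

section
/- Let χ ∈ [0,1], λ₁, λ₂ > 0, m ∈ ℂ, and real numbers u₁ = a₀+a₁, u₂ = a₀-a₁, v₁ = b₀+b₁, v₂ = b₀-b₁, c ∈ ℝ. Suppose for all φ₁,φ₂,φ₃,φ₄ ∈ ℂ: |φ₁|²u₁ + |φ₂|²u₂ + |φ₃|²v₁ + |φ₄|²v₂ ≥ 2Re{(φ̄₁φ₄ - φ̄₂φ₃)m}·c. Then χ(λ₁u₁ + λ₂u₂) + (1-χ)(λ₁v₁ + λ₂v₂) ≥ 4√(χ(1-χ))·√(λ₁λ₂)·|m|·|c|. -/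
/-! Test the form on the vector (√(χλ₁), √(χλ₂), -√((1-χ)λ₁) e, √((1-χ)λ₂) e), where the phase
`e` rotates `m c` onto the positive real axis. The two norms contribute `χ` and `1 - χ` times the
`λ`-weighted sums, and both cross terms equal `√(χ(1-χ)) √(λ₁λ₂) |m| |c|`. -/

open Complex

theorem Complex.exists_norm_eq_one_mul_eq_norm (z : ℂ) : ∃ e : ℂ, ‖e‖ = 1 ∧ e * z = ‖z‖ := by
  refine ⟨exp (-(arg z : ℂ) * I), by simpa using norm_exp_ofReal_mul_I (-arg z), ?_⟩
  conv_lhs => rw [← norm_mul_exp_arg_mul_I z]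
  rw [mul_left_comm, ← exp_add]
  simp

theorem cross_term_bound_of_forall_form_ge {u1 u2 v1 v2 c : ℝ} {m : ℂ}
    (h : ∀ φ1 φ2 φ3 φ4 : ℂ,
      (‖φ1‖)^2 * u1 + (‖φ2‖)^2 * u2 +
      (‖φ3‖)^2 * v1 + (‖φ4‖)^2 * v2 ≥
      2 * (((starRingEnd ℂ) φ1 * φ4 - (starRingEnd ℂ) φ2 * φ3) * m).re * c)
    (x1 x2 y1 y2 : ℝ) :
    2 * (x1 * y2 + x2 * y1) * (‖m‖ * |c|) ≤
      x1 ^ 2 * u1 + x2 ^ 2 * u2 + y1 ^ 2 * v1 + y2 ^ 2 * v2 := by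
  obtain ⟨e, he, hemc⟩ := exists_norm_eq_one_mul_eq_norm (m * c)
  have hform := h x1 x2 (-(y1 * e)) (y2 * e)
  have hcross : ((starRingEnd ℂ) x1 * (y2 * e) - (starRingEnd ℂ) x2 * (-(y1 * e))) * m * c
      = ((x1 * y2 + x2 * y1 : ℝ) : ℂ) * (e * (m * c)) := by
    simp only [conj_ofReal, ofReal_add, ofReal_mul]
    ring
  have hre : (((starRingEnd ℂ) x1 * (y2 * e) - (starRingEnd ℂ) x2 * (-(y1 * e))) * m).re * c
      = (x1 * y2 + x2 * y1) * (‖m‖ * |c|) := by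
    rw [← re_mul_ofReal, hcross, hemc, ← ofReal_mul, ofReal_re, norm_mul, norm_real,
      Real.norm_eq_abs]
  simp only [norm_neg, norm_mul, norm_real, Real.norm_eq_abs, he, mul_one, sq_abs] at hform
  linarith

theorem stmt_10 (χ lam1 lam2 : ℝ) (hχ : χ ∈ Set.Icc (0:ℝ) 1)
    (hlam1 : 0 < lam1) (hlam2 : 0 < lam2) (m : ℂ)
    (u1 u2 v1 v2 c : ℝ)
    (h : ∀ φ1 φ2 φ3 φ4 : ℂ,
      (‖φ1‖)^2 * u1 + (‖φ2‖)^2 * u2 +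
      (‖φ3‖)^2 * v1 + (‖φ4‖)^2 * v2 ≥
      2 * (((starRingEnd ℂ) φ1 * φ4 - (starRingEnd ℂ) φ2 * φ3) * m).re * c) :
    χ * (lam1 * u1 + lam2 * u2) + (1 - χ) * (lam1 * v1 + lam2 * v2) ≥
      4 * Real.sqrt (χ * (1 - χ)) * Real.sqrt (lam1 * lam2) * ‖m‖ * |c| := by
  obtain ⟨hχ0, hχ1⟩ := hχ
  have h1χ : 0 ≤ 1 - χ := by linarith
  have key := cross_term_bound_of_forall_form_ge h (√(χ * lam1)) (√(χ * lam2))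
    (√((1 - χ) * lam1)) (√((1 - χ) * lam2))
  rw [Real.sq_sqrt (by positivity), Real.sq_sqrt (by positivity), Real.sq_sqrt (by positivity),
    Real.sq_sqrt (by positivity)] at key
  have hcross₁ : √(χ * lam1) * √((1 - χ) * lam2) = √(χ * (1 - χ)) * √(lam1 * lam2) := by
    rw [← Real.sqrt_mul (by positivity), ← Real.sqrt_mul (by positivity)]
    ring_nf
  have hcross₂ : √(χ * lam2) * √((1 - χ) * lam1) = √(χ * (1 - χ)) * √(lam1 * lam2) := by
    rw [← Real.sqrt_mul (by positivity), ← Real.sqrt_mul (by positivity)]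
    ring_nf
  rw [hcross₁, hcross₂] at key
  linarith
end

section
/- For λ₁, λ₂ > 0 and |m| > 0, θ with sin 2θ ≠ 0, the coefficient c₂ = (1/2)((tr A)² - tr A²) of the 4×4 matrix A from Appendix A equals |m|²((λ₁-λ₂)² + 4λ₁λ₂csc²2θ)·csc²2θ/(λ₁λ₂), and in particular c₂ ≥ 0. -/
/-!
The matrix is the direct sum of its 2×2 blocks on the coordinates `{1, 4}` and `{2, 3}`, so `c₂`
is the sum of the two block determinants plus the product of the two block traces. With
`α = ½ √(λ₂/λ₁) |m|` and `β = ½ √(λ₁/λ₂) |m|` we have `αβ = |m|²/4`, so in either block the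
diagonal product `αβ / (sin²θ cos²θ) = |m|² csc² 2θ` cancels the off-diagonal one and the
determinant vanishes. What is left, `(α csc²θ + β sec²θ)(β csc²θ + α sec²θ)`, equals
`(αβ + (α - β)² sin²θ cos²θ) / (sin²θ cos²θ)²` because `sin²θ + cos²θ = 1`.
-/

open Matrix Real

theorem Matrix.trace_sq_sub_trace_mul_self_diag_antidiag {R : Type*} [CommRing R]
    (p q r t x y z w : R) :
    (!![p, 0, 0, x; 0, q, y, 0; 0, z, r, 0; w, 0, 0, t] : Matrix (Fin 4) (Fin 4) R).trace ^ 2 -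
        (!![p, 0, 0, x; 0, q, y, 0; 0, z, r, 0; w, 0, 0, t] *
          !![p, 0, 0, x; 0, q, y, 0; 0, z, r, 0; w, 0, 0, t] : Matrix (Fin 4) (Fin 4) R).trace =
      2 * ((p * t - x * w) + (q * r - y * z) + (p + t) * (q + r)) := by
  simp only [trace, diag_apply, mul_apply, of_apply, Fin.sum_univ_four, Fin.isValue, cons_val',
    cons_val_fin_one, cons_val_zero, cons_val_one, cons_val, mul_zero, add_zero, zero_add]
  ring

theorem Complex.div_ofReal_mul_conj_div_ofReal (m : ℂ) (r : ℝ) :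
    m / r * (starRingEnd ℂ m / r) = ((‖m‖ ^ 2 / r ^ 2 : ℝ) : ℂ) := by
  rw [div_mul_div_comm, Complex.mul_conj, Complex.normSq_eq_norm_sq]
  push_cast
  ring

theorem Real.sqrt_div_mul_sqrt_div {a b : ℝ} (ha : 0 < a) (hb : 0 < b) :
    √(a / b) * √(b / a) = 1 := by
  rw [← sqrt_mul (div_pos ha hb).le, div_mul_div_comm, mul_comm b, div_self (by positivity),
    sqrt_one]

theorem Real.sqrt_div_mul_mul_sqrt_div_mul {a b : ℝ} (ha : 0 < a) (hb : 0 < b) (k : ℝ) :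
    √(b / a) * k * (√(a / b) * k) = k ^ 2 := by
  linear_combination k ^ 2 * sqrt_div_mul_sqrt_div hb ha

theorem Real.sqrt_div_mul_sub_sqrt_div_mul_sq {a b : ℝ} (ha : 0 < a) (hb : 0 < b) (k : ℝ) :
    (√(b / a) * k - √(a / b) * k) ^ 2 = k ^ 2 * (a - b) ^ 2 / (a * b) := by
  rw [sub_sq, mul_pow, mul_pow, sq_sqrt (by positivity), sq_sqrt (by positivity),
    mul_assoc 2, sqrt_div_mul_mul_sqrt_div_mul ha hb]
  field_simp
  ring

theorem div_add_div_mul_div_add_div_of_add_eq_one {α β s c : ℝ} (hs : s ≠ 0) (hc : c ≠ 0)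
    (h : s + c = 1) :
    (α / s + β / c) * (β / s + α / c) = (α * β + (α - β) ^ 2 * (s * c)) / (s * c) ^ 2 := by
  field_simp
  linear_combination α * β * (s + c + 1) * h

theorem Real.sin_sq_mul_cos_sq (θ : ℝ) : sin θ ^ 2 * cos θ ^ 2 = sin (2 * θ) ^ 2 / 4 := by
  rw [sin_two_mul]
  ring

theorem stmt_17_general (lam1 lam2 : ℝ) (hlam1 : 0 < lam1) (hlam2 : 0 < lam2)
    (m : ℂ) (θ : ℝ) (hθ : Real.sin (2*θ) ≠ 0) :
    (1/2 : ℂ) * ((appendixAMatrix lam1 lam2 m θ).trace ^ 2 -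
        (appendixAMatrix lam1 lam2 m θ * appendixAMatrix lam1 lam2 m θ).trace) =
      ((‖m‖ ^ 2 * ((lam1 - lam2)^2 + 4 * lam1 * lam2 * (1 / Real.sin (2*θ))^2)
          * (1 / Real.sin (2*θ))^2 / (lam1 * lam2) : ℝ) : ℂ) ∧
    0 ≤ ‖m‖ ^ 2 * ((lam1 - lam2)^2 + 4 * lam1 * lam2 * (1 / Real.sin (2*θ))^2)
          * (1 / Real.sin (2*θ))^2 / (lam1 * lam2) := by
  refine ⟨?_, by positivity⟩
  rw [appendixAMatrix, trace_sq_sub_trace_mul_self_diag_antidiag, neg_mul_neg,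
    Complex.div_ofReal_mul_conj_div_ofReal]
  have hsc : sin θ ^ 2 * cos θ ^ 2 ≠ 0 := by
    rw [sin_sq_mul_cos_sq]; positivity
  set α := (1/2) * √(lam2 / lam1) * ‖m‖
  set β := (1/2) * √(lam1 / lam2) * ‖m‖
  have hαβ : α * β = ‖m‖ ^ 2 / 4 := by
    linear_combination sqrt_div_mul_mul_sqrt_div_mul hlam1 hlam2 (‖m‖ / 2)
  have hα_sub_β : (α - β) ^ 2 = ‖m‖ ^ 2 * (lam1 - lam2) ^ 2 / (4 * (lam1 * lam2)) := by
    linear_combination sqrt_div_mul_sub_sqrt_div_mul_sq hlam1 hlam2 (‖m‖ / 2)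
  have hdet : α / sin θ ^ 2 * (β / cos θ ^ 2) = ‖m‖ ^ 2 / sin (2 * θ) ^ 2 := by
    rw [div_mul_div_comm, hαβ, sin_sq_mul_cos_sq]; field_simp
  have hdet' : β / sin θ ^ 2 * (α / cos θ ^ 2) = ‖m‖ ^ 2 / sin (2 * θ) ^ 2 := by
    rw [← hdet]; ring
  have htraces : (α / sin θ ^ 2 + β / cos θ ^ 2) * (β / sin θ ^ 2 + α / cos θ ^ 2) =
      ‖m‖ ^ 2 * ((lam1 - lam2)^2 + 4 * lam1 * lam2 * (1 / Real.sin (2*θ))^2)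
          * (1 / Real.sin (2*θ))^2 / (lam1 * lam2) := by
    rw [div_add_div_mul_div_add_div_of_add_eq_one (left_ne_zero_of_mul hsc)
      (right_ne_zero_of_mul hsc) (sin_sq_add_cos_sq θ), sin_sq_mul_cos_sq, hαβ, hα_sub_β]
    field_simp
    ring
  rw [← Complex.ofReal_mul, ← Complex.ofReal_mul, hdet, hdet', ← htraces]
  push_cast
  ring

theorem stmt_17 (lam1 lam2 : ℝ) (hlam1 : 0 < lam1) (hlam2 : 0 < lam2)
    (m : ℂ) (hm : 0 < ‖m‖) (θ : ℝ) (hθ : Real.sin (2*θ) ≠ 0) :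
    (1/2 : ℂ) * ((appendixAMatrix lam1 lam2 m θ).trace ^ 2 -
        (appendixAMatrix lam1 lam2 m θ * appendixAMatrix lam1 lam2 m θ).trace) =
      ((‖m‖ ^ 2 * ((lam1 - lam2)^2 + 4 * lam1 * lam2 * (1 / Real.sin (2*θ))^2)
          * (1 / Real.sin (2*θ))^2 / (lam1 * lam2) : ℝ) : ℂ) ∧
    0 ≤ ‖m‖ ^ 2 * ((lam1 - lam2)^2 + 4 * lam1 * lam2 * (1 / Real.sin (2*θ))^2)
          * (1 / Real.sin (2*θ))^2 / (lam1 * lam2) :=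
  stmt_17_general lam1 lam2 hlam1 hlam2 m θ hθ
end
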